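/- In the 3-dimensional model, axiom I4 holds: for any three pairwise intersecting lines of the model there exists a fourth line meeting all three in three distinct points. In particular: (i) any vertical line a_k intersects every five-point line; (ii) for two five-point lines p, q and a vertical line a, the five-point line through p ∩ b and q ∩ c (for suitable distinct vertical lines b, c different from a) meets a in a third distinct point. -/

import Mathlib

/-!
No two vertices of the regular pentagon are antipodal (5 is odd), so any two of them are linearly
independent in the horizontal plane. Consequently a five-point line meets every vertical line, two
five-point lines with common points on two different vertical lines coincide, and points on two
different vertical lines lie on a five-point line (the plane normal to their cross product).

If two of the three lines coincide, that line is itself a transversal. Two distinct vertical lines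
never meet, so otherwise at most one line is vertical. A vertical line and two five-point lines
are met by the five-point line through points of the latter two on two further vertical lines.
Three distinct five-point lines meet pairwise on at most three of the five vertical lines, and
any remaining vertical line is a transversal.
-/

open Real

noncomputable section

/-- The vertices of the regular pentagon in the horizontal plane of `ℝ³`. -/
def pentagonPt (k : Fin 5) : Fin 3 → ℝ :=
  ![Real.cos (2 * π * (k.val : ℝ) / 5), Real.sin (2 * π * (k.val : ℝ) / 5), 0]

/-- The vertical unit direction. -/
def e3 : Fin 3 → ℝ := ![0, 0, 1]

/-- The vertical line of the model over the `k`-th pentagon vertex. -/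
def vertLine (k : Fin 5) : Set (Fin 3 → ℝ) := {x | ∃ t : ℝ, x = pentagonPt k + t • e3}

/-- The points of the model: the union of the five vertical lines. -/
def ModelPoints : Set (Fin 3 → ℝ) := ⋃ k, vertLine k

/-- Euclidean dot product in `ℝ³`. -/
def dot (n x : Fin 3 → ℝ) : ℝ := n 0 * x 0 + n 1 * x 1 + n 2 * x 2

/-- A five-point line of the model: the trace on the model points of a plane through the
origin with non-horizontal normal (such a plane contains no vertical line). -/
def IsFivePointLine (l : Set (Fin 3 → ℝ)) : Prop :=
  ∃ n : Fin 3 → ℝ, n 2 ≠ 0 ∧ l = {x ∈ ModelPoints | dot n x = 0}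

/-- A line of the model: a vertical line or a five-point line. -/
def IsModelLine (l : Set (Fin 3 → ℝ)) : Prop :=
  (∃ k, l = vertLine k) ∨ IsFivePointLine l

open Matrix

lemma exists_notMem_of_subsingleton {α : Type*} (hα : 3 < ENat.card α) {s t u : Set α}
    (hs : s.Subsingleton) (ht : t.Subsingleton) (hu : u.Subsingleton) :
    ∃ a, a ∉ s ∧ a ∉ t ∧ a ∉ u := by
  by_contra! h
  have hcover : Set.univ ⊆ s ∪ t ∪ u := fun a _ => by
    simp only [Set.mem_union]
    tauto
  have hle : ENat.card α ≤ 3 :=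
    calc ENat.card α = (Set.univ : Set α).encard := (Set.encard_univ α).symm
      _ ≤ (s ∪ t ∪ u).encard := Set.encard_le_encard hcover
      _ ≤ s.encard + t.encard + u.encard :=
        (Set.encard_union_le _ _).trans (add_le_add_left (Set.encard_union_le _ _) _)
      _ ≤ 1 + 1 + 1 := by
        gcongr <;> exact Set.encard_le_one_iff_subsingleton.mpr ‹_›
      _ = 3 := by norm_num
  exact hle.not_gt hα

lemma exists_two_ne_of_fin_five (k : Fin 5) : ∃ m m' : Fin 5, k ≠ m ∧ k ≠ m' ∧ m ≠ m' := by
  revert k; decide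

lemma pentagonPt_det_ne_zero {j k : Fin 5} (hjk : j ≠ k) :
    pentagonPt j 0 * pentagonPt k 1 - pentagonPt j 1 * pentagonPt k 0 ≠ 0 := by
  have hsin : pentagonPt j 0 * pentagonPt k 1 - pentagonPt j 1 * pentagonPt k 0 =
      Real.sin (2 * π * ((k.val : ℝ) - j.val) / 5) := by
    simp only [pentagonPt, Matrix.cons_val_zero, Matrix.cons_val_one]
    rw [mul_sub, sub_div, Real.sin_sub]
    ring
  rw [hsin, Ne, Real.sin_eq_zero_iff]
  rintro ⟨n, hn⟩
  -- `2 (k - j) = 5 n` with `0 < |k - j| < 5` is impossible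
  have hnk : ((5 * n : ℤ) : ℝ) = ((2 * ((k.val : ℤ) - j.val) : ℤ) : ℝ) := by
    push_cast
    nlinarith [Real.pi_pos]
  have := j.is_lt
  have := k.is_lt
  have := Fin.val_ne_of_ne hjk
  have := Int.cast_injective hnk
  omega

lemma coeffs_eq_zero_of_pentagonPt {j k : Fin 5} (hjk : j ≠ k) {α β : ℝ}
    (hj : α * pentagonPt j 0 + β * pentagonPt j 1 = 0)
    (hk : α * pentagonPt k 0 + β * pentagonPt k 1 = 0) : α = 0 ∧ β = 0 := by
  have hdet := pentagonPt_det_ne_zero hjk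
  constructor
  · refine (mul_eq_zero.mp ?_).resolve_right hdet
    linear_combination pentagonPt k 1 * hj - pentagonPt j 1 * hk
  · refine (mul_eq_zero.mp ?_).resolve_right hdet
    linear_combination pentagonPt j 0 * hk - pentagonPt k 0 * hj

lemma pentagonPt_add_smul_e3 (k : Fin 5) (t : ℝ) :
    pentagonPt k + t • e3 = ![pentagonPt k 0, pentagonPt k 1, t] := by
  ext i
  fin_cases i <;> simp [pentagonPt, e3]

lemma dot_eq_dotProduct (n x : Fin 3 → ℝ) : dot n x = n ⬝ᵥ x := by
  simp only [dot, vec3_dotProduct]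

lemma dot_pentagonPt_add_smul_e3 (n : Fin 3 → ℝ) (k : Fin 5) (t : ℝ) :
    dot n (pentagonPt k + t • e3) = n 0 * pentagonPt k 0 + n 1 * pentagonPt k 1 + n 2 * t := by
  rw [pentagonPt_add_smul_e3]
  simp [dot]

lemma add_smul_e3_injective (k : Fin 5) : Function.Injective fun t : ℝ => pentagonPt k + t • e3 :=
  fun s t h => by
    simp only [pentagonPt_add_smul_e3] at h
    simpa using congrFun h 2

lemma vertLine_disjoint {j k : Fin 5} (hjk : j ≠ k) : Disjoint (vertLine j) (vertLine k) := by
  refine Set.disjoint_left.mpr ?_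
  rintro _ ⟨s, rfl⟩ ⟨t, h⟩
  simp only [pentagonPt_add_smul_e3] at h
  have h0 : pentagonPt j 0 = pentagonPt k 0 := by simpa using congrFun h 0
  have h1 : pentagonPt j 1 = pentagonPt k 1 := by simpa using congrFun h 1
  exact pentagonPt_det_ne_zero hjk (by rw [h0, h1]; ring)

lemma eq_of_vertLine_inter_nonempty {j k : Fin 5} (h : (vertLine j ∩ vertLine k).Nonempty) :
    j = k := by
  by_contra hjk
  exact Set.not_disjoint_iff_nonempty_inter.mpr h (vertLine_disjoint hjk)

lemma mem_modelPoints_of_mem_vertLine {k : Fin 5} {x : Fin 3 → ℝ} (hx : x ∈ vertLine k) :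
    x ∈ ModelPoints :=
  Set.mem_iUnion_of_mem k hx

lemma IsFivePointLine.subset_modelPoints {l : Set (Fin 3 → ℝ)} (hl : IsFivePointLine l) :
    l ⊆ ModelPoints := by
  obtain ⟨n, -, rfl⟩ := hl
  exact Set.sep_subset _ _

lemma IsFivePointLine.vertLine_inter_nonempty {l : Set (Fin 3 → ℝ)} (hl : IsFivePointLine l)
    (k : Fin 5) : (vertLine k ∩ l).Nonempty := by
  obtain ⟨n, hn, rfl⟩ := hl
  have hx : pentagonPt k + (-(n 0 * pentagonPt k 0 + n 1 * pentagonPt k 1) / n 2) • e3 ∈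
      vertLine k := ⟨_, rfl⟩
  refine ⟨_, hx, mem_modelPoints_of_mem_vertLine hx, ?_⟩
  rw [dot_pentagonPt_add_smul_e3]
  field_simp
  ring

lemma mem_vertLine_of_mem_modelPoints {x : Fin 3 → ℝ} (hx : x ∈ ModelPoints) :
    ∃ k, x ∈ vertLine k :=
  Set.mem_iUnion.mp hx

lemma IsFivePointLine.eq_of_common_points {l l' : Set (Fin 3 → ℝ)} (hl : IsFivePointLine l)
    (hl' : IsFivePointLine l') {j k : Fin 5} (hjk : j ≠ k) {x y : Fin 3 → ℝ}
    (hxj : x ∈ vertLine j) (hyk : y ∈ vertLine k) (hx : x ∈ l ∩ l') (hy : y ∈ l ∩ l') :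
    l = l' := by
  obtain ⟨n, hn, rfl⟩ := hl
  obtain ⟨n', hn', rfl⟩ := hl'
  obtain ⟨s, rfl⟩ := hxj
  obtain ⟨t, rfl⟩ := hyk
  simp only [Set.mem_inter_iff, Set.mem_sep_iff, dot_pentagonPt_add_smul_e3] at hx hy
  -- the horizontal vector `n' 2 • n - n 2 • n'` is orthogonal to two non-parallel pentagon vertices
  obtain ⟨h0, h1⟩ := coeffs_eq_zero_of_pentagonPt hjk (α := n' 2 * n 0 - n 2 * n' 0)
    (β := n' 2 * n 1 - n 2 * n' 1)
    (by linear_combination n' 2 * hx.1.2 - n 2 * hx.2.2)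
    (by linear_combination n' 2 * hy.1.2 - n 2 * hy.2.2)
  have hdot (z : Fin 3 → ℝ) : n' 2 * dot n z = n 2 * dot n' z := by
    simp only [dot]
    linear_combination z 0 * h0 + z 1 * h1
  ext z
  refine and_congr_right fun _ => ?_
  rw [← mul_right_inj' hn', hdot, mul_zero, mul_eq_zero, or_iff_right hn]

lemma IsFivePointLine.subsingleton_meetVertices {l l' : Set (Fin 3 → ℝ)}
    (hl : IsFivePointLine l) (hl' : IsFivePointLine l') (hne : l ≠ l') :
    {k | (vertLine k ∩ (l ∩ l')).Nonempty}.Subsingleton := by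
  rintro j ⟨x, hxj, hx⟩ k ⟨y, hyk, hy⟩
  by_contra hjk
  exact hne (hl.eq_of_common_points hl' hjk hxj hyk hx hy)

lemma exists_isFivePointLine_mem_mem {j k : Fin 5} (hjk : j ≠ k) {x y : Fin 3 → ℝ}
    (hx : x ∈ vertLine j) (hy : y ∈ vertLine k) :
    ∃ l, IsFivePointLine l ∧ x ∈ l ∧ y ∈ l := by
  refine ⟨{z ∈ ModelPoints | dot (x ⨯₃ y) z = 0}, ⟨x ⨯₃ y, ?_, rfl⟩,
    ⟨mem_modelPoints_of_mem_vertLine hx, ?_⟩, ⟨mem_modelPoints_of_mem_vertLine hy, ?_⟩⟩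
  · obtain ⟨s, rfl⟩ := hx
    obtain ⟨t, rfl⟩ := hy
    simpa [pentagonPt_add_smul_e3, cross_apply] using pentagonPt_det_ne_zero hjk
  · rw [dot_eq_dotProduct, dotProduct_comm]
    exact dot_self_cross x y
  · rw [dot_eq_dotProduct, dotProduct_comm]
    exact dot_cross_self x y

lemma IsModelLine.exists_ne_ne_of_mem {l : Set (Fin 3 → ℝ)} (hl : IsModelLine l)
    {C : Fin 3 → ℝ} (hC : C ∈ l) : ∃ A B, A ∈ l ∧ B ∈ l ∧ A ≠ B ∧ B ≠ C ∧ A ≠ C := by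
  rcases hl with ⟨k, rfl⟩ | hl
  · obtain ⟨t, rfl⟩ := hC
    have hinj := add_smul_e3_injective k
    exact ⟨_, _, ⟨t + 1, rfl⟩, ⟨t + 2, rfl⟩, hinj.ne (by norm_num), hinj.ne (by norm_num),
      hinj.ne (by norm_num)⟩
  · obtain ⟨j, hCj⟩ := mem_vertLine_of_mem_modelPoints (hl.subset_modelPoints hC)
    obtain ⟨m, m', hjm, hjm', hmm'⟩ := exists_two_ne_of_fin_five j
    obtain ⟨A, hAm, hA⟩ := hl.vertLine_inter_nonempty m
    obtain ⟨B, hBm', hB⟩ := hl.vertLine_inter_nonempty m'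
    exact ⟨A, B, hA, hB, (vertLine_disjoint hmm').ne_of_mem hAm hBm',
      (vertLine_disjoint hjm').ne_of_mem hCj hBm' |>.symm,
      (vertLine_disjoint hjm).ne_of_mem hCj hAm |>.symm⟩

def HasTransversal (l₁ l₂ l₃ : Set (Fin 3 → ℝ)) : Prop :=
  ∃ d : Set (Fin 3 → ℝ), IsModelLine d ∧
    ∃ A B C : Fin 3 → ℝ, A ≠ B ∧ B ≠ C ∧ A ≠ C ∧
      A ∈ d ∧ A ∈ l₁ ∧ B ∈ d ∧ B ∈ l₂ ∧ C ∈ d ∧ C ∈ l₃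

namespace HasTransversal

variable {l₁ l₂ l₃ : Set (Fin 3 → ℝ)}

lemma swap₁₂ (h : HasTransversal l₁ l₂ l₃) : HasTransversal l₂ l₁ l₃ := by
  obtain ⟨d, hd, A, B, C, hAB, hBC, hAC, hA, hA₁, hB, hB₂, hC, hC₃⟩ := h
  exact ⟨d, hd, B, A, C, hAB.symm, hAC, hBC, hB, hB₂, hA, hA₁, hC, hC₃⟩

lemma swap₂₃ (h : HasTransversal l₁ l₂ l₃) : HasTransversal l₁ l₃ l₂ := by
  obtain ⟨d, hd, A, B, C, hAB, hBC, hAC, hA, hA₁, hB, hB₂, hC, hC₃⟩ := h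
  exact ⟨d, hd, A, C, B, hAC, hBC.symm, hAB, hA, hA₁, hC, hC₃, hB, hB₂⟩

end HasTransversal

lemma hasTransversal_self {l l' : Set (Fin 3 → ℝ)} (hl : IsModelLine l)
    (h : (l ∩ l').Nonempty) : HasTransversal l l l' := by
  obtain ⟨C, hC, hC'⟩ := h
  obtain ⟨A, B, hA, hB, hAB, hBC, hAC⟩ := hl.exists_ne_ne_of_mem hC
  exact ⟨l, hl, A, B, C, hAB, hBC, hAC, hA, hA, hB, hB, hC, hC'⟩

lemma hasTransversal_vertLine {l₂ l₃ : Set (Fin 3 → ℝ)} (k : Fin 5) (h₂ : IsFivePointLine l₂)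
    (h₃ : IsFivePointLine l₃) : HasTransversal (vertLine k) l₂ l₃ := by
  obtain ⟨m, m', hkm, hkm', hmm'⟩ := exists_two_ne_of_fin_five k
  obtain ⟨B, hBm, hB⟩ := h₂.vertLine_inter_nonempty m
  obtain ⟨C, hCm', hC⟩ := h₃.vertLine_inter_nonempty m'
  obtain ⟨d, hd, hBd, hCd⟩ := exists_isFivePointLine_mem_mem hmm' hBm hCm'
  obtain ⟨A, hAk, hAd⟩ := hd.vertLine_inter_nonempty k
  exact ⟨d, Or.inr hd, A, B, C, (vertLine_disjoint hkm).ne_of_mem hAk hBm,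
    (vertLine_disjoint hmm').ne_of_mem hBm hCm', (vertLine_disjoint hkm').ne_of_mem hAk hCm',
    hAd, hAk, hBd, hB, hCd, hC⟩

lemma hasTransversal_of_isFivePointLine {l₁ l₂ l₃ : Set (Fin 3 → ℝ)} (h₁ : IsFivePointLine l₁)
    (h₂ : IsFivePointLine l₂) (h₃ : IsFivePointLine l₃) (h₁₂ : l₁ ≠ l₂) (h₂₃ : l₂ ≠ l₃)
    (h₁₃ : l₁ ≠ l₃) : HasTransversal l₁ l₂ l₃ := by
  -- a vertical line through none of the at most three pairwise meeting points
  obtain ⟨m, hm₁₂, hm₂₃, hm₁₃⟩ := exists_notMem_of_subsingleton (by norm_num)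
    (h₁.subsingleton_meetVertices h₂ h₁₂) (h₂.subsingleton_meetVertices h₃ h₂₃)
    (h₁.subsingleton_meetVertices h₃ h₁₃)
  obtain ⟨A, hAm, hA⟩ := h₁.vertLine_inter_nonempty m
  obtain ⟨B, hBm, hB⟩ := h₂.vertLine_inter_nonempty m
  obtain ⟨C, hCm, hC⟩ := h₃.vertLine_inter_nonempty m
  refine ⟨vertLine m, Or.inl ⟨m, rfl⟩, A, B, C, ?_, ?_, ?_, hAm, hA, hBm, hB, hCm, hC⟩
  · rintro rfl
    exact hm₁₂ ⟨A, hAm, hA, hB⟩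
  · rintro rfl
    exact hm₂₃ ⟨B, hBm, hB, hC⟩
  · rintro rfl
    exact hm₁₃ ⟨A, hAm, hA, hC⟩

lemma hasTransversal_of_inter_nonempty {l₁ l₂ l₃ : Set (Fin 3 → ℝ)} (h₁ : IsModelLine l₁)
    (h₂ : IsModelLine l₂) (h₃ : IsModelLine l₃) (h₁₂ : (l₁ ∩ l₂).Nonempty)
    (h₂₃ : (l₂ ∩ l₃).Nonempty) (h₁₃ : (l₁ ∩ l₃).Nonempty) : HasTransversal l₁ l₂ l₃ := by
  by_cases e₁₂ : l₁ = l₂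
  · subst e₁₂
    exact hasTransversal_self h₁ h₁₃
  by_cases e₂₃ : l₂ = l₃
  · subst e₂₃
    exact (hasTransversal_self h₂ (Set.inter_comm _ _ ▸ h₁₂)).swap₂₃.swap₁₂
  by_cases e₁₃ : l₁ = l₃
  · subst e₁₃
    exact (hasTransversal_self h₁ h₁₂).swap₂₃
  -- two distinct vertical lines do not meet, so at most one of the lines is vertical
  rcases h₁ with ⟨k₁, rfl⟩ | f₁ <;> rcases h₂ with ⟨k₂, rfl⟩ | f₂ <;>
    rcases h₃ with ⟨k₃, rfl⟩ | f₃
  · exact absurd (congrArg vertLine (eq_of_vertLine_inter_nonempty h₁₂)) e₁₂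
  · exact absurd (congrArg vertLine (eq_of_vertLine_inter_nonempty h₁₂)) e₁₂
  · exact absurd (congrArg vertLine (eq_of_vertLine_inter_nonempty h₁₃)) e₁₃
  · exact hasTransversal_vertLine k₁ f₂ f₃
  · exact absurd (congrArg vertLine (eq_of_vertLine_inter_nonempty h₂₃)) e₂₃
  · exact (hasTransversal_vertLine k₂ f₁ f₃).swap₁₂
  · exact (hasTransversal_vertLine k₃ f₁ f₂).swap₁₂.swap₂₃
  · exact hasTransversal_of_isFivePointLine f₁ f₂ f₃ e₁₂ e₂₃ e₁₃

/-- Axiom I4 in the model: every vertical line meets every five-point line, and for any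
three pairwise intersecting lines of the model there is a fourth line meeting all three
in three distinct points. -/
theorem model_I4 :
    (∀ k : Fin 5, ∀ l : Set (Fin 3 → ℝ), IsFivePointLine l → (vertLine k ∩ l).Nonempty) ∧
    (∀ l₁ l₂ l₃ : Set (Fin 3 → ℝ),
      IsModelLine l₁ → IsModelLine l₂ → IsModelLine l₃ →
      (l₁ ∩ l₂).Nonempty → (l₂ ∩ l₃).Nonempty → (l₁ ∩ l₃).Nonempty →
      ∃ d : Set (Fin 3 → ℝ), IsModelLine d ∧
        ∃ A B C : Fin 3 → ℝ, A ≠ B ∧ B ≠ C ∧ A ≠ C ∧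
          A ∈ d ∧ A ∈ l₁ ∧ B ∈ d ∧ B ∈ l₂ ∧ C ∈ d ∧ C ∈ l₃) :=
  ⟨fun k _ hl => hl.vertLine_inter_nonempty k,
    fun _ _ _ => hasTransversal_of_inter_nonempty⟩

end
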